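/- Let (Ω, ℙ) be a probability space, let ℰ be a measurable space of environments, let 𝒮 be a set of states, and let d ≥ 1. Let A : ℰ → Set(ℝ^d) and B : ℰ × 𝒮 → Set(ℝ^d) assign to each environment a ground-truth set and, for each state, a predicted set. Define for each environment e the nonconformity score U(e) := sup_{s ∈ 𝒮} sup_{a ∈ A(e)} infEdist(a, B(e, s)) (an extended nonnegative real), and assume e ↦ U(e) is measurable. Let E₁, …, E_N, E_test : Ω → ℰ be random environments such that the real-valued (extended) scores U(E₁), …, U(E_N), U(E_test) are exchangeable (their joint law is invariant under every permutation of the indices). Fix ε ∈ (0,1) with k := ⌈(N+1)(1−ε)⌉ ≤ N, and let q̂ be the k-th order statistic of U(E₁), …, U(E_N). Then ℙ( for every s ∈ 𝒮, A(E_test) ⊆ {x ∈ ℝ^d : infEdist(x, B(E_test, s)) ≤ q̂} ) ≥ 1 − ε. Equivalently, the calibrated perception system, which inflates every predicted set so that its q̂-thickening is reported, has expected misdetection rate (the probability that some ground-truth point from some state lies outside the inflated prediction) at most ε on a test environment. -/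

import Mathlib

/-!
The event in question is `U (E_test) ≤ q̂`, since `U` is exactly the least inflation that covers
the ground truth from every state; and `U (E_test) ≤ q̂` holds iff fewer than `k` of all `N + 1`
scores lie strictly below the test score. Whatever the scores, at least `k` of the `N + 1` indices
have this property, and by exchangeability every index has it with the same probability, so the
test index has it with probability at least `k / (N + 1) ≥ 1 - ε`.
-/

open MeasureTheory EMetric

/-- The `k`-th order statistic (the `k`-th smallest value, zero-indexed) of a
finite tuple of values in a linear order. -/
noncomputable def orderStat {α : Type*} [LinearOrder α] {N : ℕ} (k : Fin N) (v : Fin N → α) : α :=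
  v (Tuple.sort v k)

open Finset
open scoped ENNReal

section StrictRank

variable {α ι : Type*} [LinearOrder α] [Fintype ι]

def strictRank (v : ι → α) (j : ι) : ℕ := #{i | v i < v j}

theorem strictRank_comp_perm (v : ι → α) (σ : Equiv.Perm ι) (j : ι) :
    strictRank (v ∘ σ) j = strictRank v (σ j) :=
  card_equiv σ (by simp)

theorem measurable_strictRank [TopologicalSpace α] [OrderClosedTopology α]
    [SecondCountableTopology α] [MeasurableSpace α] [OpensMeasurableSpace α] (j : ι) :
    Measurable fun v : ι → α => strictRank v j := by
  simp only [strictRank, card_filter]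
  exact Finset.measurable_sum _ fun i _ =>
    Measurable.ite (measurableSet_lt (measurable_pi_apply i) (measurable_pi_apply j))
      measurable_const measurable_const

end StrictRank

section OrderStatistics

variable {α : Type*} [LinearOrder α] {n : ℕ}

theorem Monotone.card_filter_lt_le_iff {w : Fin n → α} (hw : Monotone w) (p : Fin n) (x : α) :
    #{i | w i < x} ≤ p ↔ x ≤ w p := by
  rw [← not_lt, Fin.lt_card_filter_univ_iff_apply_of_imp _
    fun _ _ hji h => (hw hji).trans_lt h, not_lt]

theorem le_orderStat_iff (w : Fin n → α) (p : Fin n) (x : α) :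
    x ≤ orderStat p w ↔ #{i | w i < x} ≤ p := by
  change x ≤ (w ∘ Tuple.sort w) p ↔ _
  rw [← (Tuple.monotone_sort w).card_filter_lt_le_iff]
  exact Iff.of_eq (congrArg (· ≤ (p : ℕ)) (card_equiv (Tuple.sort w) (by simp)))

theorem strictRank_sort_le (v : Fin n → α) (p : Fin n) :
    strictRank v (Tuple.sort v p) ≤ p := by
  rw [← strictRank_comp_perm]
  exact ((Tuple.monotone_sort v).card_filter_lt_le_iff p _).2 le_rfl

theorem le_card_filter_strictRank_lt (v : Fin n → α) {k : ℕ} (hk : k ≤ n) :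
    k ≤ #{j | strictRank v j < k} := by
  have hcard : #{p : Fin n | (p : ℕ) < k} = k := by
    rw [Fin.card_filter_val_lt, min_eq_right hk]
  calc k = #{p : Fin n | (p : ℕ) < k} := hcard.symm
    _ ≤ #{p | strictRank v (Tuple.sort v p) < k} :=
      card_le_card fun p hp => by
        simp only [mem_filter, mem_univ, true_and] at hp ⊢
        exact (strictRank_sort_le v p).trans_lt hp
    _ = #{j | strictRank v j < k} := card_equiv (Tuple.sort v) (by simp)

theorem strictRank_last (v : Fin (n + 1) → α) :
    strictRank v (Fin.last n) = #{i : Fin n | v i.castSucc < v (Fin.last n)} := by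
  rw [strictRank, card_filter, card_filter, Fin.sum_univ_castSucc]
  simp

theorem le_orderStat_castSucc_iff (v : Fin (n + 1) → α) {k : ℕ} (hk₀ : 0 < k)
    (hk : k - 1 < n) :
    v (Fin.last n) ≤ orderStat ⟨k - 1, hk⟩ (fun i => v i.castSucc) ↔
      strictRank v (Fin.last n) < k := by
  rw [le_orderStat_iff, strictRank_last, Fin.val_mk]
  omega

end OrderStatistics

section Exchangeable

variable {Ω α : Type*} [MeasurableSpace Ω] {ℙ : Measure Ω} [LinearOrder α] [TopologicalSpace α]
  [OrderClosedTopology α] [SecondCountableTopology α] [MeasurableSpace α] [OpensMeasurableSpace α]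

theorem measure_strictRank_lt_eq {ι : Type*} [Fintype ι] [DecidableEq ι] {X : Ω → ι → α}
    (hX : Measurable X)
    (hexch : ∀ σ : Equiv.Perm ι, ℙ.map (fun ω i => X ω (σ i)) = ℙ.map X) (k : ℕ) (j j' : ι) :
    ℙ {ω | strictRank (X ω) j < k} = ℙ {ω | strictRank (X ω) j' < k} := by
  set σ := Equiv.swap j' j
  have hXσ : Measurable fun ω i => X ω (σ i) := measurable_pi_lambda _ fun i => hX.eval
  have hS : MeasurableSet {v : ι → α | strictRank v j' < k} :=
    measurable_strictRank j' measurableSet_Iio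
  calc ℙ {ω | strictRank (X ω) j < k}
      = ℙ.map (fun ω i => X ω (σ i)) {v | strictRank v j' < k} := by
        rw [Measure.map_apply hXσ hS]
        congr 1
        ext ω
        change _ < k ↔ strictRank (X ω ∘ σ) j' < k
        rw [strictRank_comp_perm, Equiv.swap_apply_left]
    _ = ℙ.map X {v | strictRank v j' < k} := by rw [hexch]
    _ = ℙ {ω | strictRank (X ω) j' < k} := Measure.map_apply hX hS

theorem le_sum_measure_strictRank_lt [IsProbabilityMeasure ℙ] {n k : ℕ} {X : Ω → Fin n → α}
    (hX : Measurable X) (hk : k ≤ n) :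
    (k : ℝ≥0∞) ≤ ∑ j, ℙ {ω | strictRank (X ω) j < k} := by
  have hS (j : Fin n) : MeasurableSet {ω | strictRank (X ω) j < k} :=
    hX (measurable_strictRank j measurableSet_Iio)
  have hcount (ω : Ω) :
      (k : ℝ≥0∞) ≤ ∑ j, {ω | strictRank (X ω) j < k}.indicator 1 ω := by
    have h := le_card_filter_strictRank_lt (X ω) hk
    rw [card_filter] at h
    simp only [Set.indicator_apply, Pi.one_apply]
    exact_mod_cast h
  calc (k : ℝ≥0∞) = ∫⁻ _, (k : ℝ≥0∞) ∂ℙ := by simp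
    _ ≤ ∫⁻ ω, ∑ j, {ω | strictRank (X ω) j < k}.indicator 1 ω ∂ℙ := lintegral_mono hcount
    _ = ∑ j, ℙ {ω | strictRank (X ω) j < k} := by
        rw [lintegral_finsetSum _ fun j _ => measurable_one.indicator (hS j)]
        simp_rw [lintegral_indicator_one (hS _)]

theorem div_le_measure_strictRank_lt [IsProbabilityMeasure ℙ] {n k : ℕ} {X : Ω → Fin n → α}
    (hX : Measurable X)
    (hexch : ∀ σ : Equiv.Perm (Fin n), ℙ.map (fun ω i => X ω (σ i)) = ℙ.map X)
    (hk : k ≤ n) (j : Fin n) :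
    (k : ℝ≥0∞) / n ≤ ℙ {ω | strictRank (X ω) j < k} := by
  refine ENNReal.div_le_of_le_mul' ?_
  calc (k : ℝ≥0∞) ≤ ∑ j, ℙ {ω | strictRank (X ω) j < k} := le_sum_measure_strictRank_lt hX hk
    _ = n * ℙ {ω | strictRank (X ω) j < k} := by
        simp [measure_strictRank_lt_eq hX hexch k _ j]

end Exchangeable

/-- Proposition 1 (conformal calibration of a perception system): with
nonconformity score `U e = ⨆ s, ⨆ a ∈ A e, infEdist a (B e s)` over all states `s`,
if the scores of the environments `E 0, …, E N` are exchangeable, `ε ∈ (0,1)`, and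
`k = ⌈(N+1)(1-ε)⌉ ≤ N`, then with probability at least `1 - ε` the ground-truth set of the
test environment is contained, from every state, in the `q̂`-thickening of the predicted set,
where `q̂` is the `k`-th order statistic of the calibration scores. -/
theorem calibrated_perception_misdetection_bound
    {Ω : Type*} [MeasurableSpace Ω] (ℙ : Measure Ω) [IsProbabilityMeasure ℙ]
    {ℰ : Type*} [MeasurableSpace ℰ] {𝒮 : Type*}
    (d : ℕ)
    (A : ℰ → Set (Fin d → ℝ)) (B : ℰ → 𝒮 → Set (Fin d → ℝ))
    (U : ℰ → ENNReal)
    (hUdef : ∀ e, U e = ⨆ s : 𝒮, ⨆ a ∈ A e, infEdist a (B e s))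
    (hUmeas : Measurable U)
    (N : ℕ) (hN : 1 ≤ N)
    (E : Fin (N + 1) → Ω → ℰ) (hE : ∀ i, Measurable (E i))
    (hexch : ∀ σ : Equiv.Perm (Fin (N + 1)),
      Measure.map (fun ω => fun i => U (E (σ i) ω)) ℙ =
        Measure.map (fun ω => fun i => U (E i ω)) ℙ)
    (ε : ℝ) (hε : ε ∈ Set.Ioo (0 : ℝ) 1)
    (k : ℕ) (hk : (k : ℤ) = ⌈((N : ℝ) + 1) * (1 - ε)⌉) (hkN : k ≤ N) :
    ℙ {ω | ∀ s : 𝒮, A (E (Fin.last N) ω) ⊆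
        {x : Fin d → ℝ | infEdist x (B (E (Fin.last N) ω) s) ≤
          orderStat (⟨k - 1, by omega⟩ : Fin N)
            (fun i : Fin N => U (E i.castSucc ω))}} ≥
      ENNReal.ofReal (1 - ε) := by
  have hceil : ((N : ℝ) + 1) * (1 - ε) ≤ k := by exact_mod_cast hk ▸ Int.le_ceil _
  have hk₀ : 0 < k := by
    have : (0 : ℝ) < k := hceil.trans_lt' (mul_pos (by positivity) (by linarith [hε.2]))
    exact_mod_cast this
  have hquantile : ENNReal.ofReal (1 - ε) ≤ (k : ℝ≥0∞) / (N + 1 : ℕ) := by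
    rw [← ENNReal.ofReal_natCast k, ← ENNReal.ofReal_natCast (N + 1),
      ← ENNReal.ofReal_div_of_pos (by positivity)]
    exact ENNReal.ofReal_le_ofReal ((le_div_iff₀ (by positivity)).2 (by push_cast; linarith))
  set X : Ω → Fin (N + 1) → ℝ≥0∞ := fun ω i => U (E i ω)
  have hX : Measurable X := measurable_pi_lambda _ fun i => hUmeas.comp (hE i)
  refine hquantile.trans <| (div_le_measure_strictRank_lt hX hexch (by omega) (Fin.last N)).trans <|
    measure_mono fun ω hω s a ha => ?_
  have hcover : U (E (Fin.last N) ω) ≤ _ :=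
    (le_orderStat_castSucc_iff (X ω) hk₀ (by omega)).2 hω
  rw [hUdef] at hcover
  exact iSup₂_le_iff.1 (iSup_le_iff.1 hcover s) a ha
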